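/- Let γ = (γ₁,γ₂,γ₃) : [a,b] → ℝ³ be a Euclidean C²-smooth regular curve and t ∈ [a,b] a point with ω(γ̇(t)) ≠ 0. Then the limit as L → +∞ of the curvature k^{L,∇²}_γ(t) associated to the adapted connection exists and equals 0. -/
import Mathlib


open Filter Real Topology

theorem curvature_limit_adapted_nonhorizontal
    (γ₁ γ₂ γ₃ ω : ℝ → ℝ) (k : ℝ → ℝ → ℝ) (a b t : ℝ)
    (ht : t ∈ Set.Icc a b)
    (hγ : ContDiffOn ℝ 2 (fun s => (γ₁ s, γ₂ s, γ₃ s)) (Set.Icc a b))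
    (hreg : ∀ s ∈ Set.Icc a b, ¬ (deriv γ₁ s = 0 ∧ deriv γ₂ s = 0 ∧ deriv γ₃ s = 0))
    (hω : ∀ s, ω s = deriv γ₃ s + (1/2) * (γ₂ s * deriv γ₁ s - γ₁ s * deriv γ₂ s))
    (hk : ∀ L s, k L s = Real.sqrt (((deriv (deriv γ₁) s)^2 + (deriv (deriv γ₂) s)^2 + L * (deriv ω s)^2) / ((deriv γ₁ s)^2 + (deriv γ₂ s)^2 + L * (ω s)^2)^2 - (deriv γ₁ s * deriv (deriv γ₁) s + deriv γ₂ s * deriv (deriv γ₂) s + L * ω s * deriv ω s)^2 / ((deriv γ₁ s)^2 + (deriv γ₂ s)^2 + L * (ω s)^2)^3))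
    (h0 : ω t ≠ 0) :
    Filter.Tendsto (fun L => k L t) Filter.atTop (nhds 0) := by
  set d1 := deriv γ₁ t with hd1
  set d2 := deriv γ₂ t with hd2
  set e1 := deriv (deriv γ₁) t with he1
  set e2 := deriv (deriv γ₂) t with he2
  set w := ω t with hw
  set w' := deriv ω t with hw'
  have hc4 : (0:ℝ) < w^2 := by positivity
  set g : ℝ → ℝ := fun u =>
      ((e1^2 + e2^2)*u + w'^2)*u / ((d1^2 + d2^2)*u + w^2)^2
      - ((d1*e1 + d2*e2)*u + w*w')^2*u / ((d1^2 + d2^2)*u + w^2)^3 with hg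
  have hgc : ContinuousAt g 0 := by
    apply ContinuousAt.sub
    · exact ContinuousAt.div (by fun_prop) (by fun_prop)
        (by simp only [mul_zero, zero_add]; positivity)
    · exact ContinuousAt.div (by fun_prop) (by fun_prop)
        (by simp only [mul_zero, zero_add]; positivity)
  have hg0 : g 0 = 0 := by simp [hg]
  have h1 : Tendsto (fun L : ℝ => g L⁻¹) atTop (𝓝 0) := by
    have := hgc.tendsto.comp tendsto_inv_atTop_zero
    rwa [hg0] at this
  have heq : (fun L : ℝ => (e1^2 + e2^2 + L*w'^2)/(d1^2 + d2^2 + L*w^2)^2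
      - (d1*e1 + d2*e2 + L*w*w')^2/(d1^2 + d2^2 + L*w^2)^3)
      =ᶠ[atTop] fun L => g L⁻¹ := by
    filter_upwards [eventually_gt_atTop (max 0 ((|d1^2 + d2^2| + 1)/w^2))] with L hL
    have hL0 : 0 < L := lt_of_le_of_lt (le_max_left _ _) hL
    have h2 : (|d1^2 + d2^2| + 1)/w^2 < L := lt_of_le_of_lt (le_max_right _ _) hL
    have hden : 0 < d1^2 + d2^2 + L*w^2 := by
      have h3 := (div_lt_iff₀ hc4).mp h2
      have h4 := neg_abs_le (d1^2 + d2^2)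
      nlinarith
    simp only [hg]
    field_simp
  have h2 : Tendsto (fun L : ℝ => (e1^2 + e2^2 + L*w'^2)/(d1^2 + d2^2 + L*w^2)^2
      - (d1*e1 + d2*e2 + L*w*w')^2/(d1^2 + d2^2 + L*w^2)^3) atTop (𝓝 0) :=
    h1.congr' heq.symm
  have hs : Tendsto Real.sqrt (𝓝 0) (𝓝 0) := by
    simpa using (Real.continuous_sqrt.tendsto 0)
  have := hs.comp h2
  simp only [hk]
  exact this.congr (fun L => rfl)
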